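/- (Flat-space version of Theorem 2.) Let H, σ : ℝ³ → M₃(ℝ) be smooth symmetric trace-free matrix fields and ω, a : ℝ³ → ℝ³ smooth vector fields satisfying pointwise the purely magnetic equations [σ,H] = 3Hω, div H = 0, curl H = −2 a∧H, and H = curl σ + (Dω)^ + 2 a⊗̂ω. Then at every point x with H(x) ≠ 0 one has 0 < Tr((Dω)^ + 2 a⊗̂ω)²(x) < Tr(curl σ)²(x). In particular, such a system with H nowhere zero cannot exist if Tr((Dω)^ + 2 a⊗̂ω)² ≤ 0 somewhere or Tr((Dω)^ + 2 a⊗̂ω)² ≥ Tr(curl σ)² somewhere. -/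

import Mathlib

open Matrix BigOperators
open scoped RealInnerProductSpace

noncomputable section

/-- Vectors in ℝ³. -/
abbrev V3 := Fin 3 → ℝ

/-- 3×3 real matrices. -/
abbrev M3 := Matrix (Fin 3) (Fin 3) ℝ

/-- The Levi-Civita symbol on three indices. -/
def eps (a b c : Fin 3) : ℝ :=
  if (a, b, c) = (0, 1, 2) ∨ (a, b, c) = (1, 2, 0) ∨ (a, b, c) = (2, 0, 1) then 1
  else if (a, b, c) = (0, 2, 1) ∨ (a, b, c) = (2, 1, 0) ∨ (a, b, c) = (1, 0, 2) then -1
  else 0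

/-- The Frobenius inner product ⟨A,B⟩ = Σ_{i,j} A_{ij} B_{ij}. -/
def frob (A B : M3) : ℝ := ∑ i, ∑ j, A i j * B i j

/-- The Euclidean inner product on ℝ³. -/
def dot3 (v w : V3) : ℝ := ∑ a, v a * w a

/-- The generalized vector product of two 3×3 matrices:
    [A,B]_a = Σ_{b,c} ε_{abc} (AB)_{bc}. -/
def mcross (A B : M3) : V3 := fun a => ∑ b, ∑ c, eps a b c * (A * B) b c

/-- v ∧ B : (v∧B)_{ab} = ½ Σ_{c,d} (ε_{acd} v_c B_{db} + ε_{bcd} v_c B_{da}). -/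
def vwedge (v : V3) (B : M3) : M3 := fun a b =>
  (1 / 2 : ℝ) * ∑ c, ∑ d, (eps a c d * v c * B d b + eps b c d * v c * B d a)

/-- The tensor product (a⊗ω)_{ij} = a_i ω_j. -/
def tens (a ω : V3) : M3 := fun i j => a i * ω j

/-- The trace-free symmetric part X^ = ½(X+Xᵀ) − (1/3)(Tr X)·I. -/
def hat (X : M3) : M3 := (1 / 2 : ℝ) • (X + Xᵀ) - ((1 / 3 : ℝ) * X.trace) • (1 : M3)

/-- The partial derivative ∂_c f at x of a scalar field f : ℝ³ → ℝ. -/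
def pd (c : Fin 3) (f : V3 → ℝ) (x : V3) : ℝ := fderiv ℝ f x (Pi.single c 1)

/-- The curl of a matrix field:
    (curl A)_{ab} = ½ Σ_{c,d} (ε_{acd} ∂_c A_{db} + ε_{bcd} ∂_c A_{da}). -/
def curlM (A : V3 → M3) (x : V3) : M3 := fun a b =>
  (1 / 2 : ℝ) * ∑ c, ∑ d,
    (eps a c d * pd c (fun y => A y d b) x + eps b c d * pd c (fun y => A y d a) x)

/-- The divergence of a vector field: div w = Σ_a ∂_a w_a. -/
def divV (w : V3 → V3) (x : V3) : ℝ := ∑ a, pd a (fun y => w y a) x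

/-- The divergence of a matrix field: (div A)_b = Σ_a ∂_a A_{ab}. -/
def divM (A : V3 → M3) (x : V3) : V3 := fun b => ∑ a, pd a (fun y => A y a b) x

/-- The Jacobian matrix field (Dw)_{ab} = ∂_a w_b. -/
def jac (w : V3 → V3) (x : V3) : M3 := fun a b => pd a (fun y => w y b) x


section Helpers

set_option maxRecDepth 8000

set_option maxHeartbeats 1000000

lemma eps000 : eps 0 0 0 = 0 := by rw [eps, if_neg (by decide), if_neg (by decide)]
lemma eps001 : eps 0 0 1 = 0 := by rw [eps, if_neg (by decide), if_neg (by decide)]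
lemma eps002 : eps 0 0 2 = 0 := by rw [eps, if_neg (by decide), if_neg (by decide)]
lemma eps010 : eps 0 1 0 = 0 := by rw [eps, if_neg (by decide), if_neg (by decide)]
lemma eps011 : eps 0 1 1 = 0 := by rw [eps, if_neg (by decide), if_neg (by decide)]
lemma eps012 : eps 0 1 2 = 1 := by rw [eps, if_pos (by decide)]
lemma eps020 : eps 0 2 0 = 0 := by rw [eps, if_neg (by decide), if_neg (by decide)]
lemma eps021 : eps 0 2 1 = -1 := by rw [eps, if_neg (by decide), if_pos (by decide)]
lemma eps022 : eps 0 2 2 = 0 := by rw [eps, if_neg (by decide), if_neg (by decide)]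
lemma eps100 : eps 1 0 0 = 0 := by rw [eps, if_neg (by decide), if_neg (by decide)]
lemma eps101 : eps 1 0 1 = 0 := by rw [eps, if_neg (by decide), if_neg (by decide)]
lemma eps102 : eps 1 0 2 = -1 := by rw [eps, if_neg (by decide), if_pos (by decide)]
lemma eps110 : eps 1 1 0 = 0 := by rw [eps, if_neg (by decide), if_neg (by decide)]
lemma eps111 : eps 1 1 1 = 0 := by rw [eps, if_neg (by decide), if_neg (by decide)]
lemma eps112 : eps 1 1 2 = 0 := by rw [eps, if_neg (by decide), if_neg (by decide)]
lemma eps120 : eps 1 2 0 = 1 := by rw [eps, if_pos (by decide)]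
lemma eps121 : eps 1 2 1 = 0 := by rw [eps, if_neg (by decide), if_neg (by decide)]
lemma eps122 : eps 1 2 2 = 0 := by rw [eps, if_neg (by decide), if_neg (by decide)]
lemma eps200 : eps 2 0 0 = 0 := by rw [eps, if_neg (by decide), if_neg (by decide)]
lemma eps201 : eps 2 0 1 = 1 := by rw [eps, if_pos (by decide)]
lemma eps202 : eps 2 0 2 = 0 := by rw [eps, if_neg (by decide), if_neg (by decide)]
lemma eps210 : eps 2 1 0 = -1 := by rw [eps, if_neg (by decide), if_pos (by decide)]
lemma eps211 : eps 2 1 1 = 0 := by rw [eps, if_neg (by decide), if_neg (by decide)]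
lemma eps212 : eps 2 1 2 = 0 := by rw [eps, if_neg (by decide), if_neg (by decide)]
lemma eps220 : eps 2 2 0 = 0 := by rw [eps, if_neg (by decide), if_neg (by decide)]
lemma eps221 : eps 2 2 1 = 0 := by rw [eps, if_neg (by decide), if_neg (by decide)]
lemma eps222 : eps 2 2 2 = 0 := by rw [eps, if_neg (by decide), if_neg (by decide)]


lemma pd_funext {f g : V3 → ℝ} (h : ∀ y, f y = g y) (c : Fin 3) (x : V3) :
    pd c f x = pd c g x := by
  have : f = g := funext h
  rw [this]

lemma pd_sum {ι : Type*} (s : Finset ι) (f : ι → V3 → ℝ) {x : V3}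
    (hf : ∀ i ∈ s, DifferentiableAt ℝ (f i) x) (c : Fin 3) :
    pd c (fun y => ∑ i ∈ s, f i y) x = ∑ i ∈ s, pd c (f i) x := by
  unfold pd
  rw [fderiv_fun_sum hf]
  simp

lemma pd_const_mul {f : V3 → ℝ} {x : V3} (hf : DifferentiableAt ℝ f x) (k : ℝ) (c : Fin 3) :
    pd c (fun y => k * f y) x = k * pd c f x := by
  unfold pd
  rw [fderiv_const_mul hf]
  simp

lemma pd_mul {f g : V3 → ℝ} {x : V3} (hf : DifferentiableAt ℝ f x)
    (hg : DifferentiableAt ℝ g x) (c : Fin 3) :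
    pd c (fun y => f y * g y) x = pd c f x * g x + f x * pd c g x := by
  unfold pd
  rw [fderiv_fun_mul hf hg]
  simp only [ContinuousLinearMap.add_apply, ContinuousLinearMap.smul_apply, smul_eq_mul]
  ring

lemma D1 (σ H : V3 → M3) (ω : V3 → V3) (x : V3)
    (hH : ∀ i j, ContDiff ℝ (⊤ : ℕ∞) fun x => H x i j)
    (hσ : ∀ i j, ContDiff ℝ (⊤ : ℕ∞) fun x => σ x i j)
    (hω : ∀ i, ContDiff ℝ (⊤ : ℕ∞) fun x => ω x i)
    (hbi1 : ∀ y, mcross (σ y) (H y) = (3 : ℝ) • (H y).mulVec (ω y)) (e a : Fin 3) :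
    (∑ b, ∑ c, ∑ d, eps a b c *
        (pd e (fun y => σ y b d) x * H x d c + σ x b d * pd e (fun y => H y d c) x))
      = ∑ b, (3:ℝ) * (pd e (fun y => H y a b) x * ω x b + H x a b * pd e (fun y => ω y b) x) := by
  have dσ : ∀ i j, DifferentiableAt ℝ (fun y => σ y i j) x :=
    fun i j => ((hσ i j).differentiable (by simp)).differentiableAt
  have dH : ∀ i j, DifferentiableAt ℝ (fun y => H y i j) x :=
    fun i j => ((hH i j).differentiable (by simp)).differentiableAt
  have dω : ∀ i, DifferentiableAt ℝ (fun y => ω y i) x :=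
    fun i => ((hω i).differentiable (by simp)).differentiableAt
  have hL : pd e (fun y => mcross (σ y) (H y) a) x
      = ∑ b, ∑ c, ∑ d, eps a b c *
        (pd e (fun y => σ y b d) x * H x d c + σ x b d * pd e (fun y => H y d c) x) := by
    have h1 : ∀ y : V3, mcross (σ y) (H y) a
        = ∑ b, ∑ c, ∑ d, eps a b c * (σ y b d * H y d c) := by
      intro y
      simp [mcross, Matrix.mul_apply, Finset.mul_sum]
    rw [pd_funext h1]
    rw [pd_sum _ _ (fun b _ => by
      exact DifferentiableAt.fun_sum fun c _ => DifferentiableAt.fun_sum fun d _ =>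
        (((dσ b d).mul (dH d c)).const_mul _))]
    refine Finset.sum_congr rfl fun b _ => ?_
    rw [pd_sum _ _ (fun c _ => DifferentiableAt.fun_sum fun d _ =>
        (((dσ b d).fun_mul (dH d c)).const_mul _))]
    refine Finset.sum_congr rfl fun c _ => ?_
    rw [pd_sum _ _ (fun d _ => (((dσ b d).fun_mul (dH d c)).const_mul _))]
    refine Finset.sum_congr rfl fun d _ => ?_
    rw [pd_const_mul ((dσ b d).fun_mul (dH d c)), pd_mul (dσ b d) (dH d c)]
  have hR : pd e (fun y => mcross (σ y) (H y) a) x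
      = ∑ b, (3:ℝ) * (pd e (fun y => H y a b) x * ω x b + H x a b * pd e (fun y => ω y b) x) := by
    have h1 : ∀ y : V3, mcross (σ y) (H y) a = ∑ b, (3:ℝ) * (H y a b * ω y b) := by
      intro y
      rw [hbi1 y]
      simp [Matrix.mulVec, dotProduct, Finset.mul_sum]
    rw [pd_funext h1]
    rw [pd_sum _ _ (fun b _ => ((dH a b).fun_mul (dω b)).const_mul _)]
    refine Finset.sum_congr rfl fun b _ => ?_
    rw [pd_const_mul ((dH a b).fun_mul (dω b)), pd_mul (dH a b) (dω b)]
  rw [← hL, hR]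

lemma alg1 (S Hm : Fin 3 → Fin 3 → ℝ) (dS dH : Fin 3 → Fin 3 → Fin 3 → ℝ)
    (hs : ∀ i j, Hm j i = Hm i j) (sσ : ∀ i j, S j i = S i j)
    (hd : ∀ c i j, dH c j i = dH c i j) :
    ∑ a, ∑ b, ∑ c, ∑ d, eps a b c * (dS a b d * Hm d c + S b d * dH a d c)
      = (∑ i, ∑ j, ((1/2:ℝ) * ∑ c, ∑ d, (eps i c d * dS c d j + eps j c d * dS c d i)) * Hm i j)
        - (∑ i, ∑ j, S i j * ((1/2:ℝ) * ∑ c, ∑ d, (eps i c d * dH c d j + eps j c d * dH c d i))) := by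
  simp only [Fin.sum_univ_three]
  simp only [eps000, eps001, eps002, eps010, eps011, eps012, eps020, eps021, eps022, eps100, eps101, eps102, eps110, eps111, eps112, eps120, eps121, eps122, eps200, eps201, eps202, eps210, eps211, eps212, eps220, eps221, eps222]
  simp only [hs 0 1, hs 0 2, hs 1 2, sσ 0 1, sσ 0 2, sσ 1 2, hd 0 0 1, hd 0 0 2, hd 0 1 2,
    hd 1 0 1, hd 1 0 2, hd 1 1 2, hd 2 0 1, hd 2 0 2, hd 2 1 2]
  ring

lemma alg4 (S Hm : M3) (av : V3) (hS : ∀ i j, S j i = S i j) (hHm : ∀ i j, Hm j i = Hm i j) :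
    frob S (vwedge av Hm) = - dot3 av (mcross S Hm) := by
  simp only [frob, vwedge, dot3, mcross, Matrix.mul_apply, Fin.sum_univ_three]
  simp only [eps000, eps001, eps002, eps010, eps011, eps012, eps020, eps021, eps022, eps100, eps101, eps102, eps110, eps111, eps112, eps120, eps121, eps122, eps200, eps201, eps202, eps210, eps211, eps212, eps220, eps221, eps222]
  simp only [hS 0 1, hS 0 2, hS 1 2, hHm 0 1, hHm 0 2, hHm 1 2]
  ring

lemma frob_comm (A B : M3) : frob A B = frob B A := by
  simp only [frob]
  exact Finset.sum_congr rfl fun i _ => Finset.sum_congr rfl fun j _ => mul_comm _ _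

lemma frob_add_right (A B C : M3) : frob A (B + C) = frob A B + frob A C := by
  simp only [frob, Matrix.add_apply, Fin.sum_univ_three]
  ring

lemma frob_smul_right (c : ℝ) (A B : M3) : frob A (c • B) = c * frob A B := by
  simp only [frob, Matrix.smul_apply, smul_eq_mul, Fin.sum_univ_three]
  ring

lemma frob_sub_sub (A B : M3) :
    frob (A - B) (A - B) = frob A A - 2 * frob A B + frob B B := by
  simp only [frob, Matrix.sub_apply, Fin.sum_univ_three]
  ring

lemma frob_self_nonneg (X : M3) : 0 ≤ frob X X :=
  Finset.sum_nonneg fun i _ => Finset.sum_nonneg fun j _ => mul_self_nonneg _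

lemma frob_self_eq_zero {X : M3} (h : frob X X = 0) : X = 0 := by
  have h1 : ∀ i ∈ (Finset.univ : Finset (Fin 3)), (∑ j, X i j * X i j) = 0 :=
    (Finset.sum_eq_zero_iff_of_nonneg
      (fun i _ => Finset.sum_nonneg fun j _ => mul_self_nonneg _)).1 h
  have h2 : ∀ i j, X i j = 0 := by
    intro i j
    have := (Finset.sum_eq_zero_iff_of_nonneg
      (fun j _ => mul_self_nonneg (X i j))).1 (h1 i (Finset.mem_univ i)) j (Finset.mem_univ j)
    exact mul_self_eq_zero.1 this
  ext i j
  simpa using h2 i j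

lemma frob_self_pos {X : M3} (h : X ≠ 0) : 0 < frob X X := by
  rcases (frob_self_nonneg X).lt_or_eq with h' | h'
  · exact h'
  · exact absurd (frob_self_eq_zero h'.symm) h

lemma frob_hat (B X : M3) (hB : ∀ i j, B j i = B i j)
    (htr : B 0 0 + B 1 1 + B 2 2 = 0) : frob B (hat X) = frob B X := by
  simp only [frob, hat, Matrix.sub_apply, Matrix.smul_apply, Matrix.add_apply,
    Matrix.transpose_apply, Matrix.one_apply, Matrix.trace, Matrix.diag, smul_eq_mul,
    Fin.sum_univ_three]
  simp only [show ((0:Fin 3) = 1) = False from by decide, show ((1:Fin 3) = 0) = False from by decide,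
    show ((0:Fin 3) = 2) = False from by decide, show ((2:Fin 3) = 0) = False from by decide,
    show ((1:Fin 3) = 2) = False from by decide, show ((2:Fin 3) = 1) = False from by decide,
    if_false, if_true, mul_zero, mul_one, sub_zero]
  norm_num
  simp only [hB 0 1, hB 0 2, hB 1 2]
  linear_combination (-(1/3 : ℝ) * (X 0 0 + X 1 1 + X 2 2)) * htr

lemma hat_sym (X : M3) (i j : Fin 3) : hat X j i = hat X i j := by
  rcases eq_or_ne i j with h | h
  · rw [h]
  · simp only [hat, Matrix.sub_apply, Matrix.smul_apply, Matrix.add_apply,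
      Matrix.transpose_apply, Matrix.one_apply, if_neg h, if_neg (Ne.symm h), smul_eq_mul]
    ring

lemma trace_frob (X : M3) (h : ∀ i j, X j i = X i j) : (X * X).trace = frob X X := by
  simp only [Matrix.trace, Matrix.diag, Matrix.mul_apply, frob, Fin.sum_univ_three]
  simp only [h 0 1, h 0 2, h 1 2]

end Helpers

/-- flat-space version of Theorem 2: under the purely magnetic
    equations, wherever H ≠ 0 one has
    0 < Tr((Dω)^ + 2 a⊗̂ω)² < Tr(curl σ)². -/
theorem stmt_12 (H σ : V3 → M3) (ω a : V3 → V3)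
    (hH : ∀ i j, ContDiff ℝ (⊤ : ℕ∞) fun x => H x i j)
    (hσ : ∀ i j, ContDiff ℝ (⊤ : ℕ∞) fun x => σ x i j)
    (hω : ∀ i, ContDiff ℝ (⊤ : ℕ∞) fun x => ω x i)
    (ha : ∀ i, ContDiff ℝ (⊤ : ℕ∞) fun x => a x i)
    (hHsym : ∀ x, (H x)ᵀ = H x) (hHtf : ∀ x, (H x).trace = 0)
    (hσsym : ∀ x, (σ x)ᵀ = σ x) (hσtf : ∀ x, (σ x).trace = 0)
    (hbi1 : ∀ x, mcross (σ x) (H x) = (3 : ℝ) • (H x).mulVec (ω x))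
    (hbi2 : ∀ x, divM H x = 0)
    (hbi3 : ∀ x, curlM H x = -(2 : ℝ) • vwedge (a x) (H x))
    (hRicci : ∀ x, H x = curlM σ x + hat (jac ω x) + (2 : ℝ) • hat (tens (a x) (ω x))) :
    ∀ x, H x ≠ 0 →
      0 < ((hat (jac ω x) + (2 : ℝ) • hat (tens (a x) (ω x)))
            * (hat (jac ω x) + (2 : ℝ) • hat (tens (a x) (ω x)))).trace
      ∧ ((hat (jac ω x) + (2 : ℝ) • hat (tens (a x) (ω x)))
            * (hat (jac ω x) + (2 : ℝ) • hat (tens (a x) (ω x)))).trace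
        < (curlM σ x * curlM σ x).trace := by
  intro x hx
  have hs : ∀ i j, H x j i = H x i j := fun i j => congrFun (congrFun (hHsym x) i) j
  have ss : ∀ i j, σ x j i = σ x i j := fun i j => congrFun (congrFun (hσsym x) i) j
  have hds : ∀ (c i j : Fin 3), pd c (fun y => H y j i) x = pd c (fun y => H y i j) x :=
    fun c i j => pd_funext (fun y => congrFun (congrFun (hHsym y) i) j) c x
  have htr : H x 0 0 + H x 1 1 + H x 2 2 = 0 := by
    have := hHtf x
    simpa [Matrix.trace, Matrix.diag, Fin.sum_univ_three] using this
  have hdiv : ∀ b : Fin 3, (∑ e, pd e (fun y => H y e b) x) = 0 := by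
    intro b
    have := congrFun (hbi2 x) b
    simpa [divM] using this
  have D2 : (∑ a', ∑ b, ∑ c, ∑ d, eps a' b c *
        (pd a' (fun y => σ y b d) x * H x d c + σ x b d * pd a' (fun y => H y d c) x))
      = ∑ a', ∑ b, (3:ℝ) *
        (pd a' (fun y => H y a' b) x * ω x b + H x a' b * pd a' (fun y => ω y b) x) :=
    Finset.sum_congr rfl fun a' _ => D1 σ H ω x hH hσ hω hbi1 a' a'
  have A1 : (∑ a', ∑ b, ∑ c, ∑ d, eps a' b c *
        (pd a' (fun y => σ y b d) x * H x d c + σ x b d * pd a' (fun y => H y d c) x))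
      = frob (curlM σ x) (H x) - frob (σ x) (curlM H x) :=
    alg1 (fun i j => σ x i j) (fun i j => H x i j)
      (fun c i j => pd c (fun y => σ y i j) x) (fun c i j => pd c (fun y => H y i j) x)
      hs ss hds
  have A2 : (∑ a', ∑ b, (3:ℝ) *
        (pd a' (fun y => H y a' b) x * ω x b + H x a' b * pd a' (fun y => ω y b) x))
      = 3 * frob (H x) (jac ω x) := by
    have h0 := hdiv 0
    have h1 := hdiv 1
    have h2 := hdiv 2
    simp only [Fin.sum_univ_three] at h0 h1 h2 ⊢
    simp only [frob, jac, Fin.sum_univ_three]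
    linear_combination 3 * ω x 0 * h0 + 3 * ω x 1 * h1 + 3 * ω x 2 * h2
  have kC : frob (curlM σ x) (H x)
      = frob (σ x) (curlM H x) + 3 * frob (H x) (jac ω x) := by
    have := (A1.symm.trans D2).trans A2
    linarith
  have A4 : frob (σ x) (vwedge (a x) (H x)) = - dot3 (a x) (mcross (σ x) (H x)) :=
    alg4 (σ x) (H x) (a x) ss hs
  have A5 : dot3 (a x) (mcross (σ x) (H x)) = 3 * frob (H x) (tens (a x) (ω x)) := by
    rw [hbi1 x]
    simp only [dot3, frob, tens, Matrix.mulVec, dotProduct, Pi.smul_apply, smul_eq_mul,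
      Fin.sum_univ_three]
    ring
  have kQ : frob (σ x) (curlM H x) = 6 * frob (H x) (tens (a x) (ω x)) := by
    rw [hbi3 x, frob_smul_right, A4, A5]
    ring
  have A6 : frob (H x) (hat (jac ω x) + (2:ℝ) • hat (tens (a x) (ω x)))
      = frob (H x) (jac ω x) + 2 * frob (H x) (tens (a x) (ω x)) := by
    rw [frob_add_right, frob_smul_right, frob_hat (H x) _ hs htr, frob_hat (H x) _ hs htr]
  have hxeq : H x = curlM σ x + (hat (jac ω x) + (2:ℝ) • hat (tens (a x) (ω x))) := by
    rw [hRicci x, add_assoc]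
  have key : frob (H x) (H x)
      = 4 * frob (H x) (hat (jac ω x) + (2:ℝ) • hat (tens (a x) (ω x))) := by
    have hsplit : frob (H x) (H x)
        = frob (H x) (curlM σ x)
          + frob (H x) (hat (jac ω x) + (2:ℝ) • hat (tens (a x) (ω x))) := by
      nth_rewrite 2 [hxeq]
      rw [frob_add_right]
    rw [hsplit, frob_comm (H x) (curlM σ x), kC, kQ, A6]
    ring
  have hhpos : 0 < frob (H x) (H x) := frob_self_pos hx
  have hppos : 0 < frob (hat (jac ω x) + (2:ℝ) • hat (tens (a x) (ω x)))
      (hat (jac ω x) + (2:ℝ) • hat (tens (a x) (ω x))) := by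
    rcases (frob_self_nonneg (hat (jac ω x) + (2:ℝ) • hat (tens (a x) (ω x)))).lt_or_eq
      with h' | h'
    · exact h'
    · exfalso
      have hP0 := frob_self_eq_zero h'.symm
      have hz : frob (H x) (0 : M3) = 0 := by simp [frob]
      rw [hP0, hz] at key
      linarith
  have hCeq : curlM σ x = H x - (hat (jac ω x) + (2:ℝ) • hat (tens (a x) (ω x))) := by
    rw [hxeq]
    abel
  have cceq : frob (curlM σ x) (curlM σ x)
      = frob (H x) (H x)
        - 2 * frob (H x) (hat (jac ω x) + (2:ℝ) • hat (tens (a x) (ω x)))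
        + frob (hat (jac ω x) + (2:ℝ) • hat (tens (a x) (ω x)))
            (hat (jac ω x) + (2:ℝ) • hat (tens (a x) (ω x))) := by
    rw [hCeq, frob_sub_sub]
  have Psym : ∀ i j, (hat (jac ω x) + (2:ℝ) • hat (tens (a x) (ω x))) j i
      = (hat (jac ω x) + (2:ℝ) • hat (tens (a x) (ω x))) i j := by
    intro i j
    simp only [Matrix.add_apply, Matrix.smul_apply, hat_sym, smul_eq_mul]
  have Csym : ∀ i j, curlM σ x j i = curlM σ x i j := by
    intro i j
    simp only [curlM]
    congr 1
    exact Finset.sum_congr rfl fun c _ => Finset.sum_congr rfl fun d _ => add_comm _ _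
  constructor
  · rw [trace_frob _ Psym]
    exact hppos
  · rw [trace_frob _ Psym, trace_frob _ Csym, cceq]
    linarith
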